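/- Deterministic master inequality for Ergodic Mirror Descent (inequality (bound-to-concentrate) in the paper). Assume the mirror-descent setup with strong convexity D(x,y) ≥ (1/2)‖x−y‖² and radius bound D(x,y) ≤ (1/2)R² for all x,y ∈ X. Let S be a set, ξ : ℕ → S a sequence, and F : E × S → ℝ a function such that for every s ∈ S the map F(·; s) is L-Lipschitz on X (|F(u;s) − F(v;s)| ≤ L‖u−v‖ for u,v ∈ X). Let f : E → ℝ be L-Lipschitz on X. Suppose the EMD iterates x : ℕ → X, g : ℕ → E*, with positive nonincreasing stepsizes η : ℕ → ℝ, satisfy for every t: (a) the first-order optimality condition (η(t)·g(t) + ψ'(x(t+1)) − ψ'(x(t)))(y − x(t+1)) ≥ 0 for all y ∈ X; (b) the subgradient inequality F(y; ξ_t) ≥ F(x(t); ξ_t) + g(t)(y − x(t)) for all y ∈ X; and (c) ‖g(t)‖_* ≤ L. Then for every x* ∈ X and every natural number τ with 1 ≤ τ ≤ T: ∑_{t=1}^{T} (f(x(t)) − f(x*)) ≤ R²/(2η(T)) + (L²/2)·∑_{t=1}^{T} η(t) + (τ−1)·(L·R + L²·∑_{t=1}^{T} η(t)) + ∑_{t=1}^{T−τ+1}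 ( f(x(t)) − F(x(t); ξ_{t+τ−1}) + F(x*; ξ_{t+τ−1}) − f(x*) ). -/

import Mathlib

open Finset

/-!
Each step of mirror descent is a prox step, so the three-point identity for the Bregman
divergence gives `η_t g_t (x_t - x*) ≤ D(x*, x_t) - D(x*, x_{t+1}) + η_t² L² / 2`, and the same
identity shows that the iterates move by at most `η_t L` per step. Dividing by `η_t` and
telescoping against the nonincreasing stepsizes bounds the regret `∑ g_t (x_t - x*)` by
`R² / (2 η_T) + (L² / 2) ∑ η_t`. To use the sample `ξ_{t+τ-1}`, the loss at `x_t` is compared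
with the loss at the later iterate `x_{t+τ-1}`: the drift costs `(τ - 1) L² η_t`, each of the
last `τ - 1` terms is at most `L R`, and what remains is the stated error term.
-/

section Bregman

variable {E : Type*} [NormedAddCommGroup E] [NormedSpace ℝ E]

def bregmanDiv (ψ : E → ℝ) (ψ' : E → StrongDual ℝ E) (x y : E) : ℝ :=
  ψ x - ψ y - ψ' y (x - y)

/-- The first-order optimality condition of the prox step
`x₁ = argmin_{y ∈ X} v y + bregmanDiv ψ ψ' y x₀`. -/
def IsMirrorStep (ψ' : E → StrongDual ℝ E) (X : Set E) (v : StrongDual ℝ E) (x₀ x₁ : E) : Prop :=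
  ∀ y ∈ X, 0 ≤ (v + ψ' x₁ - ψ' x₀) (y - x₁)

variable {ψ : E → ℝ} {ψ' : E → StrongDual ℝ E} {X : Set E} {v : StrongDual ℝ E} {x₀ x₁ y : E}

@[simp]
lemma bregmanDiv_self (x : E) : bregmanDiv ψ ψ' x x = 0 := by
  simp [bregmanDiv]

lemma bregmanDiv_three_point (x y z : E) :
    (ψ' y - ψ' x) (z - y) =
      bregmanDiv ψ ψ' z x - bregmanDiv ψ ψ' z y - bregmanDiv ψ ψ' y x := by
  simp only [bregmanDiv, sub_apply, map_sub]
  ring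

lemma StrongDual.apply_le_norm_mul_norm (v : StrongDual ℝ E) (w : E) : v w ≤ ‖v‖ * ‖w‖ :=
  (Real.le_norm_self _).trans (v.le_opNorm w)

lemma norm_sub_le_of_bregmanDiv_le {R : ℝ} (hR : 0 ≤ R)
    (hstrong : ∀ a ∈ X, ∀ b ∈ X, 1 / 2 * ‖a - b‖ ^ 2 ≤ bregmanDiv ψ ψ' a b)
    (hradius : ∀ a ∈ X, ∀ b ∈ X, bregmanDiv ψ ψ' a b ≤ 1 / 2 * R ^ 2)
    {a b : E} (ha : a ∈ X) (hb : b ∈ X) : ‖a - b‖ ≤ R :=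
  pow_le_pow_iff_left₀ (norm_nonneg _) hR two_ne_zero |>.1 <| by
    linarith [hstrong a ha b hb, hradius a ha b hb]

namespace IsMirrorStep

lemma apply_sub_le (h : IsMirrorStep ψ' X v x₀ x₁) (hy : y ∈ X) :
    v (x₁ - y) ≤
      bregmanDiv ψ ψ' y x₀ - bregmanDiv ψ ψ' y x₁ - bregmanDiv ψ ψ' x₁ x₀ := by
  have hopt := h y hy
  rw [add_sub_assoc, add_apply, bregmanDiv_three_point] at hopt
  have hneg : v (x₁ - y) = -v (y - x₁) := by rw [← map_neg, neg_sub]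
  linarith

lemma norm_sub_le (h : IsMirrorStep ψ' X v x₀ x₁)
    (hstrong : ∀ a ∈ X, ∀ b ∈ X, 1 / 2 * ‖a - b‖ ^ 2 ≤ bregmanDiv ψ ψ' a b)
    (hx₀ : x₀ ∈ X) (hx₁ : x₁ ∈ X) : ‖x₁ - x₀‖ ≤ ‖v‖ := by
  have hstep := h.apply_sub_le (ψ := ψ) hx₀
  have h₀ := hstrong x₀ hx₀ x₁ hx₁
  have h₁ := hstrong x₁ hx₁ x₀ hx₀
  have hv := v.apply_le_norm_mul_norm (x₀ - x₁)
  rw [bregmanDiv_self] at hstep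
  rw [norm_sub_rev] at h₀ hv
  have hneg : v (x₁ - x₀) = -v (x₀ - x₁) := by rw [← map_neg, neg_sub]
  have hsq : ‖x₁ - x₀‖ ^ 2 ≤ ‖v‖ * ‖x₁ - x₀‖ := by linarith
  by_contra! hlt
  nlinarith [norm_nonneg v]

lemma apply_sub_le_add_sq (h : IsMirrorStep ψ' X v x₀ x₁)
    (hstrong : ∀ a ∈ X, ∀ b ∈ X, 1 / 2 * ‖a - b‖ ^ 2 ≤ bregmanDiv ψ ψ' a b)
    (hx₀ : x₀ ∈ X) (hx₁ : x₁ ∈ X) (hy : y ∈ X) :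
    v (x₀ - y) ≤ bregmanDiv ψ ψ' y x₀ - bregmanDiv ψ ψ' y x₁ + ‖v‖ ^ 2 / 2 := by
  have hstep := h.apply_sub_le (ψ := ψ) hy
  have hsc := hstrong x₁ hx₁ x₀ hx₀
  have hv := v.apply_le_norm_mul_norm (x₀ - x₁)
  rw [norm_sub_rev] at hv
  have hsplit : v (x₀ - y) = v (x₀ - x₁) + v (x₁ - y) := by rw [← map_add, sub_add_sub_cancel]
  nlinarith [sq_nonneg (‖v‖ - ‖x₁ - x₀‖)]

end IsMirrorStep

end Bregman

lemma sum_Icc_sub_div_le {d η : ℕ → ℝ} {M : ℝ} (hd : ∀ s, 0 ≤ d s) (hdM : ∀ s, d s ≤ M)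
    (hη : ∀ s, 0 < η s) (hanti : Antitone η) (a b : ℕ) :
    ∑ s ∈ Icc a b, (d s - d (s + 1)) / η s ≤ M / η b := by
  rcases lt_or_ge b a with hba | hab
  · rw [Icc_eq_empty_of_lt hba, sum_empty]
    exact div_nonneg ((hd 0).trans (hdM 0)) (hη b).le
  suffices ∑ s ∈ Icc a b, (d s - d (s + 1)) / η s + d (b + 1) / η b ≤ M / η b by
    linarith [div_nonneg (hd (b + 1)) (hη b).le]
  induction b, hab using Nat.le_induction with
  | base =>
    rw [Icc_self, sum_singleton, sub_div, sub_add_cancel]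
    exact div_le_div_of_nonneg_right (hdM a) (hη a).le
  | succ b hab ih =>
    -- the weight `1 / η` only grows, and the mass it multiplies stays below `M`
    have hweight : (M - d (b + 1)) / η b ≤ (M - d (b + 1)) / η (b + 1) :=
      div_le_div_of_nonneg_left (sub_nonneg.2 (hdM _)) (hη _) (hanti b.le_succ)
    rw [sum_Icc_succ_top (by omega), sub_div]
    rw [sub_div, sub_div] at hweight
    linarith

lemma dist_le_mul_of_dist_succ_le {α : Type*} [PseudoMetricSpace α] {x : ℕ → α} {c : ℕ → ℝ}
    (hstep : ∀ s, dist (x s) (x (s + 1)) ≤ c s) (hc : Antitone c) (t j : ℕ) :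
    dist (x t) (x (t + j)) ≤ j * c t :=
  calc dist (x t) (x (t + j)) ≤ ∑ s ∈ Ico t (t + j), dist (x s) (x (s + 1)) :=
        dist_le_Ico_sum_dist x (Nat.le_add_right t j)
    _ ≤ ∑ s ∈ Ico t (t + j), c t :=
        sum_le_sum fun s hs => (hstep s).trans (hc (mem_Ico.1 hs).1)
    _ = j * c t := by simp

section MirrorDescent

variable {E : Type*} [NormedAddCommGroup E] [NormedSpace ℝ E]
  {ψ : E → ℝ} {ψ' : E → StrongDual ℝ E} {X : Set E} {R L : ℝ}
  {x : ℕ → E} {g : ℕ → StrongDual ℝ E} {η : ℕ → ℝ} {y : E}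

lemma sum_Icc_apply_sub_le
    (hstrong : ∀ a ∈ X, ∀ b ∈ X, 1 / 2 * ‖a - b‖ ^ 2 ≤ bregmanDiv ψ ψ' a b)
    (hradius : ∀ a ∈ X, ∀ b ∈ X, bregmanDiv ψ ψ' a b ≤ 1 / 2 * R ^ 2)
    (hx : ∀ t, x t ∈ X) (hη : ∀ t, 0 < η t) (hanti : Antitone η)
    (hstep : ∀ t, IsMirrorStep ψ' X (η t • g t) (x t) (x (t + 1)))
    (hg : ∀ t, ‖g t‖ ≤ L) (hy : y ∈ X) (a b : ℕ) :
    ∑ s ∈ Icc a b, g s (x s - y) ≤ R ^ 2 / (2 * η b) + L ^ 2 / 2 * ∑ s ∈ Icc a b, η s := by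
  set d := fun s => bregmanDiv ψ ψ' y (x s)
  have hterm : ∀ s, g s (x s - y) ≤ (d s - d (s + 1)) / η s + L ^ 2 / 2 * η s := by
    intro s
    have h := (hstep s).apply_sub_le_add_sq hstrong (hx s) (hx (s + 1)) hy
    rw [smul_apply, smul_eq_mul, norm_smul, Real.norm_of_nonneg (hη s).le] at h
    have hgL : η s ^ 2 * ‖g s‖ ^ 2 ≤ η s ^ 2 * L ^ 2 := by gcongr; exact hg s
    rw [div_add' _ _ _ (hη s).ne', le_div_iff₀ (hη s)]
    nlinarith
  have htel := sum_Icc_sub_div_le (d := d) (M := R ^ 2 / 2)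
    (fun s => (by positivity : (0 : ℝ) ≤ 1 / 2 * ‖y - x s‖ ^ 2).trans (hstrong _ hy _ (hx s)))
    (fun s => (hradius _ hy _ (hx s)).trans_eq (by ring)) hη hanti a b
  calc ∑ s ∈ Icc a b, g s (x s - y)
      ≤ ∑ s ∈ Icc a b, ((d s - d (s + 1)) / η s + L ^ 2 / 2 * η s) :=
        sum_le_sum fun s _ => hterm s
    _ = ∑ s ∈ Icc a b, (d s - d (s + 1)) / η s + L ^ 2 / 2 * ∑ s ∈ Icc a b, η s := by
        rw [sum_add_distrib, mul_sum]
    _ ≤ R ^ 2 / (2 * η b) + L ^ 2 / 2 * ∑ s ∈ Icc a b, η s := by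
        rw [← div_div]
        linarith

lemma norm_sub_le_of_isMirrorStep
    (hstrong : ∀ a ∈ X, ∀ b ∈ X, 1 / 2 * ‖a - b‖ ^ 2 ≤ bregmanDiv ψ ψ' a b)
    (hx : ∀ t, x t ∈ X) (hη : ∀ t, 0 < η t) (hanti : Antitone η)
    (hstep : ∀ t, IsMirrorStep ψ' X (η t • g t) (x t) (x (t + 1)))
    (hg : ∀ t, ‖g t‖ ≤ L) (hL : 0 ≤ L) (t k : ℕ) :
    ‖x t - x (t + k)‖ ≤ k * (η t * L) := by
  rw [← dist_eq_norm]
  refine dist_le_mul_of_dist_succ_le (fun s => ?_) (hanti.mul_const hL) t k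
  rw [dist_comm, dist_eq_norm]
  refine ((hstep s).norm_sub_le hstrong (hx s) (hx (s + 1))).trans ?_
  rw [norm_smul, Real.norm_of_nonneg (hη s).le]
  exact mul_le_mul_of_nonneg_left (hg s) (hη s).le

lemma sum_Icc_sub_le_delayed {S : Type*} {ξ : ℕ → S} {F : E → S → ℝ} {f : E → ℝ} {k : ℕ}
    (hFLip : ∀ s : S, ∀ u ∈ X, ∀ v ∈ X, |F u s - F v s| ≤ L * ‖u - v‖)
    (hsub : ∀ t, ∀ y ∈ X, F (x t) (ξ t) + g t (y - x t) ≤ F y (ξ t))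
    (hx : ∀ t, x t ∈ X) (hdrift : ∀ t, ‖x t - x (t + k)‖ ≤ k * (η t * L)) (hL : 0 ≤ L)
    (hy : y ∈ X) (n : ℕ) :
    ∑ t ∈ Icc 1 n, (f (x t) - f y) ≤
      ∑ t ∈ Icc 1 n, (f (x t) - F (x t) (ξ (t + k)) + F y (ξ (t + k)) - f y)
        + k * L ^ 2 * ∑ t ∈ Icc 1 n, η t + ∑ s ∈ Icc (1 + k) (n + k), g s (x s - y) := by
  -- compare `x t` with the later iterate `x (t + k)`, whose subgradient sees the sample `ξ (t + k)`
  have hterm : ∀ t, f (x t) - f y ≤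
      (f (x t) - F (x t) (ξ (t + k)) + F y (ξ (t + k)) - f y)
        + k * L ^ 2 * η t + g (t + k) (x (t + k) - y) := by
    intro t
    have hlip := (le_abs_self _).trans (hFLip (ξ (t + k)) _ (hx t) _ (hx (t + k)))
    have hdrift' := mul_le_mul_of_nonneg_left (hdrift t) hL
    have hsubgrad := hsub (t + k) y hy
    have hneg : g (t + k) (y - x (t + k)) = -g (t + k) (x (t + k) - y) := by
      rw [← map_neg, neg_sub]
    linarith
  calc ∑ t ∈ Icc 1 n, (f (x t) - f y)
      ≤ ∑ t ∈ Icc 1 n, ((f (x t) - F (x t) (ξ (t + k)) + F y (ξ (t + k)) - f y)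
          + k * L ^ 2 * η t + g (t + k) (x (t + k) - y)) :=
        sum_le_sum fun t _ => hterm t
    _ = _ := by
        rw [sum_add_distrib, sum_add_distrib, mul_sum, ← map_add_right_Icc, sum_map]
        rfl

lemma sum_Ioc_sub_le {f : E → ℝ} (hR : 0 ≤ R) (hL : 0 ≤ L)
    (hstrong : ∀ a ∈ X, ∀ b ∈ X, 1 / 2 * ‖a - b‖ ^ 2 ≤ bregmanDiv ψ ψ' a b)
    (hradius : ∀ a ∈ X, ∀ b ∈ X, bregmanDiv ψ ψ' a b ≤ 1 / 2 * R ^ 2)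
    (hfLip : ∀ u ∈ X, ∀ v ∈ X, |f u - f v| ≤ L * ‖u - v‖)
    (hx : ∀ t, x t ∈ X) (hy : y ∈ X) (n k : ℕ) :
    ∑ s ∈ Ioc n (n + k), (f (x s) - f y) ≤ k * (L * R) :=
  calc ∑ s ∈ Ioc n (n + k), (f (x s) - f y)
      ≤ #(Ioc n (n + k)) • (L * R) := sum_le_card_nsmul _ _ _ fun s _ =>
        (le_abs_self _).trans <| (hfLip _ (hx s) _ hy).trans <|
          mul_le_mul_of_nonneg_left (norm_sub_le_of_bregmanDiv_le hR hstrong hradius (hx s) hy) hL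
    _ = k * (L * R) := by rw [Nat.card_Ioc, Nat.add_sub_cancel_left, nsmul_eq_mul]

end MirrorDescent

theorem emd_master_inequality_general
    {E : Type*} [NormedAddCommGroup E] [NormedSpace ℝ E]
    (X : Set E)
    (ψ : E → ℝ) (ψ' : E → StrongDual ℝ E)
    (D : E → E → ℝ)
    (hD : ∀ x y : E, D x y = ψ x - ψ y - ψ' y (x - y))
    (R L : ℝ) (hR : 0 < R) (hL : 0 ≤ L)
    (hstrong : ∀ x ∈ X, ∀ y ∈ X, (1 / 2 : ℝ) * ‖x - y‖ ^ 2 ≤ D x y)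
    (hradius : ∀ x ∈ X, ∀ y ∈ X, D x y ≤ (1 / 2 : ℝ) * R ^ 2)
    {S : Type*} (ξ : ℕ → S)
    (F : E → S → ℝ)
    (hFLip : ∀ s : S, ∀ u ∈ X, ∀ v ∈ X, |F u s - F v s| ≤ L * ‖u - v‖)
    (f : E → ℝ)
    (hfLip : ∀ u ∈ X, ∀ v ∈ X, |f u - f v| ≤ L * ‖u - v‖)
    (x : ℕ → E) (hx : ∀ t, x t ∈ X)
    (g : ℕ → StrongDual ℝ E)
    (η : ℕ → ℝ) (hηpos : ∀ t, 0 < η t)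
    (hηmono : ∀ s t : ℕ, s ≤ t → η t ≤ η s)
    (hopt : ∀ t : ℕ, ∀ y ∈ X,
      0 ≤ (η t • g t + ψ' (x (t + 1)) - ψ' (x t)) (y - x (t + 1)))
    (hsub : ∀ t : ℕ, ∀ y ∈ X, F (x t) (ξ t) + g t (y - x t) ≤ F y (ξ t))
    (hgbd : ∀ t : ℕ, ‖g t‖ ≤ L)
    (xstar : E) (hxstar : xstar ∈ X)
    (τ T : ℕ) (hτ1 : 1 ≤ τ) (hτT : τ ≤ T) :
    ∑ t ∈ Finset.Icc 1 T, (f (x t) - f xstar)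
      ≤ R ^ 2 / (2 * η T) + (L ^ 2 / 2) * ∑ t ∈ Finset.Icc 1 T, η t
        + ((τ : ℝ) - 1) * (L * R + L ^ 2 * ∑ t ∈ Finset.Icc 1 T, η t)
        + ∑ t ∈ Finset.Icc 1 (T - τ + 1),
            (f (x t) - F (x t) (ξ (t + τ - 1)) + F xstar (ξ (t + τ - 1)) - f xstar) := by
  obtain rfl : D = bregmanDiv ψ ψ' := funext₂ hD
  obtain ⟨k, rfl⟩ : ∃ k, τ = k + 1 := ⟨τ - 1, by omega⟩
  obtain ⟨n, rfl⟩ : ∃ n, T = n + k := ⟨T - k, by omega⟩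
  have hdrift := norm_sub_le_of_isMirrorStep hstrong hx hηpos hηmono hopt hgbd hL
  have hhead := sum_Icc_sub_le_delayed (f := f) hFLip hsub hx (hdrift · k) hL hxstar n
  have hregret := sum_Icc_apply_sub_le hstrong hradius hx hηpos hηmono hopt hgbd hxstar
    (1 + k) (n + k)
  have htail := sum_Ioc_sub_le hR.le hL hstrong hradius hfLip hx hxstar n k
  have hsplit : ∑ t ∈ Icc 1 (n + k), (f (x t) - f xstar) =
      ∑ t ∈ Icc 1 n, (f (x t) - f xstar) + ∑ s ∈ Ioc n (n + k), (f (x s) - f xstar) := by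
    rw [← zero_add 1, Icc_add_one_left_eq_Ioc, Icc_add_one_left_eq_Ioc,
      sum_Ioc_consecutive _ n.zero_le (n.le_add_right k)]
  have hη₁ : ∑ t ∈ Icc 1 n, η t ≤ ∑ t ∈ Icc 1 (n + k), η t :=
    sum_le_sum_of_subset_of_nonneg (Icc_subset_Icc_right (by omega)) fun t _ _ => (hηpos t).le
  have hη₂ : ∑ t ∈ Icc (1 + k) (n + k), η t ≤ ∑ t ∈ Icc 1 (n + k), η t :=
    sum_le_sum_of_subset_of_nonneg (Icc_subset_Icc_left (by omega)) fun t _ _ => (hηpos t).le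
  have hn : n + k - (k + 1) + 1 = n := by omega
  simp only [hn, ← add_assoc, Nat.add_sub_cancel, Nat.cast_add, Nat.cast_one, add_sub_cancel_right]
  linarith [mul_le_mul_of_nonneg_left hη₁ (by positivity : (0 : ℝ) ≤ k * L ^ 2),
    mul_le_mul_of_nonneg_left hη₂ (by positivity : (0 : ℝ) ≤ L ^ 2 / 2)]

/-- Deterministic master inequality for Ergodic Mirror Descent
(inequality (bound-to-concentrate) in the paper). -/
theorem emd_master_inequality
    {E : Type*} [NormedAddCommGroup E] [NormedSpace ℝ E]
    (X : Set E) (hXne : X.Nonempty) (hXconv : Convex ℝ X)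
    (ψ : E → ℝ) (ψ' : E → StrongDual ℝ E)
    (D : E → E → ℝ)
    (hD : ∀ x y : E, D x y = ψ x - ψ y - ψ' y (x - y))
    (R L : ℝ) (hR : 0 < R) (hL : 0 ≤ L)
    (hstrong : ∀ x ∈ X, ∀ y ∈ X, (1 / 2 : ℝ) * ‖x - y‖ ^ 2 ≤ D x y)
    (hradius : ∀ x ∈ X, ∀ y ∈ X, D x y ≤ (1 / 2 : ℝ) * R ^ 2)
    {S : Type*} (ξ : ℕ → S)
    (F : E → S → ℝ)
    (hFLip : ∀ s : S, ∀ u ∈ X, ∀ v ∈ X, |F u s - F v s| ≤ L * ‖u - v‖)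
    (f : E → ℝ)
    (hfLip : ∀ u ∈ X, ∀ v ∈ X, |f u - f v| ≤ L * ‖u - v‖)
    (x : ℕ → E) (hx : ∀ t, x t ∈ X)
    (g : ℕ → StrongDual ℝ E)
    (η : ℕ → ℝ) (hηpos : ∀ t, 0 < η t)
    (hηmono : ∀ s t : ℕ, s ≤ t → η t ≤ η s)
    (hopt : ∀ t : ℕ, ∀ y ∈ X,
      0 ≤ (η t • g t + ψ' (x (t + 1)) - ψ' (x t)) (y - x (t + 1)))
    (hsub : ∀ t : ℕ, ∀ y ∈ X, F (x t) (ξ t) + g t (y - x t) ≤ F y (ξ t))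
    (hgbd : ∀ t : ℕ, ‖g t‖ ≤ L)
    (xstar : E) (hxstar : xstar ∈ X)
    (τ T : ℕ) (hτ1 : 1 ≤ τ) (hτT : τ ≤ T) :
    ∑ t ∈ Finset.Icc 1 T, (f (x t) - f xstar)
      ≤ R ^ 2 / (2 * η T) + (L ^ 2 / 2) * ∑ t ∈ Finset.Icc 1 T, η t
        + ((τ : ℝ) - 1) * (L * R + L ^ 2 * ∑ t ∈ Finset.Icc 1 T, η t)
        + ∑ t ∈ Finset.Icc 1 (T - τ + 1),
            (f (x t) - F (x t) (ξ (t + τ - 1)) + F xstar (ξ (t + τ - 1)) - f xstar) :=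
  emd_master_inequality_general X ψ ψ' D hD R L hR hL hstrong hradius ξ F hFLip f hfLip x hx g η
    hηpos hηmono hopt hsub hgbd xstar hxstar τ T hτ1 hτT
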